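/- arXiv:2601.04425 — 3 statements merged into one kernel-verified Lean document; each statement's English description precedes it below -/
import Mathlib

section
/- Let m and n be positive integers and let a, b, c be real numbers such that none of a, b, c, a−c, b−c, a+b−c is an integer. Then Σ_{k=0}^{m} [(−m)_k (a)_k (b)_k] / [(c)_k (a+b+n−m−c)_k · k!] = (−1)^{n+1} · [Γ(c)·Γ(1−c+a)·Γ(b+n−1)·Γ(1+m−n−b+c)·Γ(n−m+b−c+a)] / [Γ(m+c)·Γ(1−c+a−m)·Γ(c−b)·Γ(b−c+a+n)·Γ(b)] · Σ_{k=0}^{n−1} [(1−n)_k (1−c+a)_k (1−m−c)_k] / [(2−b−n)_k (1−c+a−m)_k · k!]. For n = 1 this reduces to the Saalschütz theorem. -/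
/-!
Write `D = a + b + n - m - c` and `N = n - 1`. Expanding `(a)_k / (D)_k` by Chu–Vandermonde and
summing over `k` by Chu–Vandermonde again gives Sheppard's transformation
`₃F₂(-m, a, b; c, D) = (c - b)_m / (c)_m · ₃F₂(-m, b, D - a; D, E)` with `E = 1 + b - c - m`.
Its numerator parameter `D - a = E + N` exceeds `E` by an integer, so
`(E + N)_j / (E)_j = (E + j)_N / (E)_N`; splitting `(E + j)_N = (b + j + (1 - m - c))_N` by the
binomial theorem for rising factorials and summing over `j` by a third Chu–Vandermonde leaves a
sum of `n` terms, which read backwards is the `₃F₂` on the right. The Gamma quotient is the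
prefactor collected on the way, via `Γ(x + k) = (x)_k Γ(x)` and
`Γ(1 - x - N) (x)_N = (-1)^N Γ(1 - x)`.
-/

open scoped BigOperators
open Finset

/-- Pochhammer (ascending factorial) `(x)_k = x (x+1) ⋯ (x+k-1)`. -/
noncomputable def poch (x : ℝ) (k : ℕ) : ℝ := Polynomial.eval x (ascPochhammer ℝ k)

open Polynomial

lemma poch_zero (x : ℝ) : poch x 0 = 1 := by simp [poch]

lemma poch_succ (x : ℝ) (k : ℕ) : poch x (k + 1) = poch x k * (x + k) := by
  simp [poch, ascPochhammer_succ_right]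

lemma poch_add (x : ℝ) (i j : ℕ) : poch x (i + j) = poch x i * poch (x + i) j := by
  simp [poch, ← ascPochhammer_mul, eval_comp]

lemma poch_mul_poch_add_comm (x : ℝ) (i j : ℕ) :
    poch x i * poch (x + i) j = poch x j * poch (x + j) i := by
  rw [← poch_add, ← poch_add, add_comm]

lemma poch_eq_neg_one_pow_mul_poch (x : ℝ) (k : ℕ) : poch x k = (-1) ^ k * poch (1 - x - k) k := by
  rw [poch, ← neg_neg x, ascPochhammer_eval_neg_eq_descPochhammer,
    descPochhammer_eval_eq_ascPochhammer, poch]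
  ring_nf

lemma poch_neg_natCast (N k : ℕ) : poch (-N) k = (-1) ^ k * k.factorial * N.choose k := by
  rw [poch, ascPochhammer_eval_neg_eq_descPochhammer, descPochhammer_eval_eq_descFactorial,
    Nat.descFactorial_eq_factorial_mul_choose]
  push_cast; ring

lemma poch_neg_natCast_add_div_factorial (i j : ℕ) :
    poch (-((j + i : ℕ) : ℝ)) j / (j + i).factorial = (-1) ^ j / i.factorial := by
  rw [poch_neg_natCast, ← Nat.choose_mul_factorial_mul_factorial (Nat.le_add_right j i),
    Nat.add_sub_cancel_left]
  have hchoose : ((j + i).choose j : ℝ) ≠ 0 := by exact_mod_cast (Nat.choose_pos (by omega)).ne'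
  push_cast
  field_simp

lemma neg_one_pow_mul_poch_sub_mul_poch {j m : ℕ} (hj : j ≤ m) (x : ℝ) :
    (-1) ^ j * poch x (m - j) * poch (1 - x - m) j = poch x m := by
  conv_rhs => rw [← Nat.sub_add_cancel hj, poch_add, poch_eq_neg_one_pow_mul_poch (x + _),
    Nat.cast_sub hj]
  rw [show 1 - (x + (m - j : ℝ)) - j = 1 - x - m by ring]
  ring

lemma poch_ne_zero_of_le {x : ℝ} {k N : ℕ} (hN : poch x N ≠ 0) (hk : k ≤ N) : poch x k ≠ 0 := by
  rw [← Nat.add_sub_cancel' hk, poch_add] at hN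
  exact left_ne_zero_of_mul hN

lemma ne_neg_natCast_of_forall_int_ne {x : ℝ} (hx : ∀ z : ℤ, x ≠ z) (j : ℕ) : x ≠ -j := by
  exact_mod_cast hx (-j)

lemma forall_int_ne_of_sub_eq_intCast {x y : ℝ} (hx : ∀ z : ℤ, x ≠ z) (w : ℤ) (h : y - x = w) :
    ∀ z : ℤ, y ≠ z := fun z hz => hx (z - w) (by push_cast; linarith)

lemma forall_int_ne_neg {x : ℝ} (hx : ∀ z : ℤ, x ≠ z) : ∀ z : ℤ, -x ≠ z :=
  fun z h => hx (-z) (by push_cast; linarith)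

lemma poch_ne_zero_of_forall_int_ne {x : ℝ} (hx : ∀ z : ℤ, x ≠ z) (k : ℕ) : poch x k ≠ 0 := by
  rw [poch, Ne, ascPochhammer_eval_eq_zero_iff]
  rintro ⟨j, -, hj⟩
  exact hx (-j) (by push_cast; linarith)

lemma Gamma_ne_zero_of_forall_int_ne {x : ℝ} (hx : ∀ z : ℤ, x ≠ z) : Real.Gamma x ≠ 0 :=
  Real.Gamma_ne_zero (ne_neg_natCast_of_forall_int_ne hx)

lemma Gamma_add_natCast {x : ℝ} (hx : ∀ j : ℕ, x ≠ -j) (k : ℕ) :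
    Real.Gamma (x + k) = poch x k * Real.Gamma x := by
  induction k with
  | zero => simp [poch_zero]
  | succ k ih =>
    have hxk : x + k ≠ 0 := fun h => hx k (by linarith)
    rw [Nat.cast_succ, ← add_assoc, Real.Gamma_add_one hxk, ih, poch_succ]
    ring

lemma Gamma_one_sub_sub_mul_poch {x : ℝ} {N : ℕ} (hx : ∀ j : ℕ, 1 - x - N ≠ -j) :
    Real.Gamma (1 - x - N) * poch x N = (-1) ^ N * Real.Gamma (1 - x) := by
  have h := Gamma_add_natCast hx N
  rw [sub_add_cancel] at h
  rw [h, poch_eq_neg_one_pow_mul_poch x N]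
  ring

lemma poch_add_eq_sum (x y : ℝ) (N : ℕ) :
    poch (x + y) N = ∑ i ∈ range (N + 1), (N.choose i : ℝ) * poch x i * poch y (N - i) := by
  have hdesc (z : ℝ) (k : ℕ) : poch z k = (-1) ^ k * (descPochhammer ℤ k).smeval (-z) := by
    have h := ascPochhammer_smeval_neg_eq_descPochhammer (-z) k
    rw [neg_neg, ascPochhammer_smeval_eq_eval] at h
    rw [poch, h, Units.smul_def, Int.coe_negOnePow_natCast, zsmul_eq_mul]
    push_cast; rfl
  rw [hdesc, neg_add, Ring.descPochhammer_smeval_add _ (Commute.all _ _),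
    Nat.sum_antidiagonal_eq_sum_range_succ_mk, mul_sum]
  refine sum_congr rfl fun i hi => ?_
  rw [hdesc x, hdesc y, ← Nat.add_sub_cancel' (Nat.le_of_lt_succ (mem_range.1 hi)), pow_add,
    Nat.add_sub_cancel_left]
  ring

lemma poch_sub_eq_sum (x y : ℝ) (N : ℕ) :
    poch (y - x) N =
      ∑ k ∈ range (N + 1), (-1) ^ k * (N.choose k : ℝ) * poch x k * poch (y + k) (N - k) := by
  rw [poch_eq_neg_one_pow_mul_poch, show 1 - (y - x) - N = x + (1 - y - N) by ring,
    poch_add_eq_sum, mul_sum]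
  refine sum_congr rfl fun k hk => ?_
  have hkN : k ≤ N := Nat.le_of_lt_succ (mem_range.1 hk)
  have hrefl : poch (1 - y - N) (N - k) = (-1) ^ (N - k) * poch (y + k) (N - k) := by
    rw [poch_eq_neg_one_pow_mul_poch, Nat.cast_sub hkN,
      show 1 - (1 - y - N) - (N - k : ℝ) = y + k by ring]
  have hsign : (-1 : ℝ) ^ N = (-1) ^ k * (-1) ^ (N - k) := by
    rw [← pow_add, Nat.add_sub_cancel' hkN]
  have hsq : ((-1 : ℝ) ^ (N - k)) ^ 2 = 1 := by simp [← pow_mul]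
  rw [hrefl, hsign]
  linear_combination ((-1) ^ k * N.choose k * poch x k * poch (y + k) (N - k)) * hsq

theorem chu_vandermonde (N : ℕ) (x : ℝ) {y : ℝ} (hy : poch y N ≠ 0) :
    ∑ k ∈ range (N + 1), poch (-N) k * poch x k / (poch y k * k.factorial) =
      poch (y - x) N / poch y N := by
  rw [poch_sub_eq_sum, sum_div]
  refine sum_congr rfl fun k hk => ?_
  have hkN : k ≤ N := Nat.le_of_lt_succ (mem_range.1 hk)
  have hyk : poch y k ≠ 0 := poch_ne_zero_of_le hy hkN
  rw [← Nat.add_sub_cancel' hkN, poch_add] at hy ⊢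
  rw [Nat.add_sub_cancel_left, poch_neg_natCast] at *
  field_simp [right_ne_zero_of_mul hy]

lemma sum_triangle_comm {α : Type*} [AddCommMonoid α] (M : ℕ) (f : ℕ → ℕ → α) :
    ∑ k ∈ range (M + 1), ∑ j ∈ range (k + 1), f k j =
      ∑ j ∈ range (M + 1), ∑ i ∈ range (M + 1 - j), f (j + i) j := by
  have h := sum_Ico_Ico_comm 0 (M + 1) (fun j k => f k j)
  simp only [← range_eq_Ico] at h
  rw [← h]
  exact sum_congr rfl fun j _ => sum_Ico_eq_sum_range _ _ _

/-- The series `₃F₂(a₁, a₂, a₃; b₁, b₂; 1)` cut off after the term `k = N`; this is the whole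
series when `a₁ = -N`. -/
noncomputable def hypergeom3F2 (N : ℕ) (a₁ a₂ a₃ b₁ b₂ : ℝ) : ℝ :=
  ∑ k ∈ range (N + 1), poch a₁ k * poch a₂ k * poch a₃ k / (poch b₁ k * poch b₂ k * k.factorial)

lemma sheppard_inner_sum_eq {m j : ℕ} (hj : j ≤ m) (b : ℝ) {c : ℝ} (hc : poch c m ≠ 0) :
    ∑ i ∈ range (m + 1 - j), poch (-m) (j + i) * poch b (j + i) *
        poch (-((j + i : ℕ) : ℝ)) j / (poch c (j + i) * (j + i).factorial) =
      (-1) ^ j * poch (-m) j * poch b j * poch (c - b) (m - j) / poch c m := by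
  have hsplit : poch c m = poch c j * poch (c + j) (m - j) := by
    rw [← poch_add, Nat.add_sub_cancel' hj]
  rw [hsplit] at hc ⊢
  have hcj := left_ne_zero_of_mul hc
  have hcj' := right_ne_zero_of_mul hc
  have hterm : ∀ i ∈ range (m - j + 1), poch (-m) (j + i) * poch b (j + i) *
        poch (-((j + i : ℕ) : ℝ)) j / (poch c (j + i) * (j + i).factorial) =
      (-1) ^ j * poch (-m) j * poch b j / poch c j *
        (poch (-((m - j : ℕ) : ℝ)) i * poch (b + j) i / (poch (c + j) i * i.factorial)) := by
    intro i hi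
    have hci : poch (c + j) i ≠ 0 := poch_ne_zero_of_le hcj' (Nat.le_of_lt_succ (mem_range.1 hi))
    rw [mul_div_mul_comm, poch_neg_natCast_add_div_factorial, poch_add, poch_add, poch_add,
      Nat.cast_sub hj, neg_sub, sub_eq_neg_add]
    field_simp
  rw [Nat.sub_add_comm hj, sum_congr rfl hterm, ← mul_sum, chu_vandermonde _ _ hcj',
    add_sub_add_right_eq_sub]
  field_simp

theorem hypergeom3F2_sheppard (m : ℕ) (a b : ℝ) {c d : ℝ} (hc : poch c m ≠ 0)
    (hd : poch d m ≠ 0) (he : poch (1 + b - c - m) m ≠ 0) :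
    hypergeom3F2 m (-m) a b c d =
      poch (c - b) m / poch c m * hypergeom3F2 m (-m) b (d - a) d (1 + b - c - m) := by
  unfold hypergeom3F2
  set f : ℕ → ℕ → ℝ := fun k j => poch (-m) k * poch b k * poch (-(k : ℝ)) j /
    (poch c k * k.factorial) * (poch (d - a) j / (poch d j * j.factorial))
  have hexpand : ∀ k ∈ range (m + 1), poch (-m) k * poch a k * poch b k /
      (poch c k * poch d k * k.factorial) = ∑ j ∈ range (k + 1), f k j := by
    intro k hk
    have hdk := poch_ne_zero_of_le hd (Nat.le_of_lt_succ (mem_range.1 hk))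
    have hv := chu_vandermonde k (d - a) hdk
    rw [sub_sub_cancel] at hv
    have hf : ∀ j ∈ range (k + 1), f k j = poch (-m) k * poch b k / (poch c k * k.factorial) *
        (poch (-(k : ℝ)) j * poch (d - a) j / (poch d j * j.factorial)) := fun j _ => by
      simp only [f]; ring
    rw [sum_congr rfl hf, ← mul_sum, hv]
    field_simp
  rw [sum_congr rfl hexpand, sum_triangle_comm, mul_sum]
  refine sum_congr rfl fun j hj => ?_
  have hjm : j ≤ m := Nat.le_of_lt_succ (mem_range.1 hj)
  have hej : poch (1 + b - c - m) j ≠ 0 := poch_ne_zero_of_le he hjm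
  have hrefl := neg_one_pow_mul_poch_sub_mul_poch hjm (c - b)
  rw [show 1 - (c - b) - m = 1 + b - c - m by ring] at hrefl
  simp only [f, ← sum_mul, sheppard_inner_sum_eq hjm b hc, ← hrefl]
  field_simp

lemma hypergeom3F2_add_natCast_eq_sum_div (m N : ℕ) (b d : ℝ) {e : ℝ} (he : poch e N ≠ 0)
    (hem : poch e m ≠ 0) :
    hypergeom3F2 m (-m) b (e + N) d e =
      (∑ j ∈ range (m + 1), poch (-m) j * poch b j * poch (e + j) N / (poch d j * j.factorial)) /
        poch e N := by
  rw [hypergeom3F2, sum_div]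
  refine sum_congr rfl fun j hj => ?_
  have hej := poch_ne_zero_of_le hem (Nat.le_of_lt_succ (mem_range.1 hj))
  have hratio : poch (e + N) j / poch e j = poch (e + j) N / poch e N := by
    rw [div_eq_div_iff hej he]
    linear_combination poch_mul_poch_add_comm e N j
  calc poch (-m) j * poch b j * poch (e + N) j / (poch d j * poch e j * j.factorial)
      = poch (-m) j * poch b j / (poch d j * j.factorial) * (poch (e + N) j / poch e j) := by ring
    _ = _ := by rw [hratio]; ring

lemma sum_poch_add_eq_sum_choose (m N : ℕ) (b e : ℝ) {d : ℝ} (hd : poch d m ≠ 0) :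
    ∑ j ∈ range (m + 1), poch (-m) j * poch b j * poch (e + j) N / (poch d j * j.factorial) =
      (∑ r ∈ range (N + 1), N.choose r * poch b r * poch (e - b) (N - r) * poch (d - b - r) m) /
        poch d m := by
  have hexpand : ∀ j ∈ range (m + 1),
      poch (-m) j * poch b j * poch (e + j) N / (poch d j * j.factorial) =
        ∑ r ∈ range (N + 1), N.choose r * poch b r * poch (e - b) (N - r) *
          (poch (-m) j * poch (b + r) j / (poch d j * j.factorial)) := by
    intro j _
    rw [show e + j = b + j + (e - b) by ring, poch_add_eq_sum, mul_sum, sum_div]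
    refine sum_congr rfl fun r _ => ?_
    linear_combination
      (N.choose r * poch (-m) j * poch (e - b) (N - r) / (poch d j * j.factorial)) *
        poch_mul_poch_add_comm b j r
  rw [sum_congr rfl hexpand, sum_comm, sum_div]
  refine sum_congr rfl fun r _ => ?_
  rw [← mul_sum, chu_vandermonde m _ hd, sub_add_eq_sub_sub, mul_div_assoc]

lemma sum_choose_poch_eq_hypergeom3F2 (N m : ℕ) (b y z : ℝ) (hz : poch (z - m) N ≠ 0)
    (hb : poch (1 - b - N) N ≠ 0) :
    ∑ r ∈ range (N + 1), N.choose r * poch b r * poch y (N - r) * poch (z - m + N - r) m =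
      poch (z - m) m * poch b N * hypergeom3F2 N (-N) z y (1 - b - N) (z - m) := by
  rw [← sum_range_reflect, hypergeom3F2, mul_sum]
  refine sum_congr rfl fun k hk => ?_
  have hkN : k ≤ N := Nat.le_of_lt_succ (mem_range.1 hk)
  have hzk := poch_ne_zero_of_le hz hkN
  have hbk := poch_ne_zero_of_le hb hkN
  have hsplit : poch b N = poch b (N - k) * ((-1) ^ k * poch (1 - b - N) k) := by
    conv_lhs => rw [← Nat.sub_add_cancel hkN, poch_add, poch_eq_neg_one_pow_mul_poch (b + _),
      Nat.cast_sub hkN]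
    rw [show 1 - (b + (N - k : ℝ)) - k = 1 - b - N by ring]
  have hcomm := poch_mul_poch_add_comm (z - m) m k
  rw [sub_add_cancel] at hcomm
  rw [Nat.add_sub_cancel, Nat.choose_symm hkN, Nat.sub_sub_self hkN, Nat.cast_sub hkN,
    show z - m + N - (N - k : ℝ) = z - m + k by ring, hsplit, poch_neg_natCast]
  have hsq : ((-1 : ℝ) ^ k) ^ 2 = 1 := by simp [← pow_mul]
  field_simp
  rw [hsq]
  linear_combination (-(N.choose k * poch b (N - k) * poch y k : ℝ)) * hcomm

lemma Gamma_quotient_eq_poch_quotient (m N : ℕ) {a b c : ℝ} (hb : ∀ z : ℤ, b ≠ z)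
    (hc : ∀ z : ℤ, c ≠ z) (hA : ∀ z : ℤ, 1 - c + a - m ≠ z)
    (hD : ∀ z : ℤ, a + b + ((N + 1 : ℕ) : ℝ) - m - c ≠ z) (hE : ∀ z : ℤ, 1 + b - c - m ≠ z) :
    (-1 : ℝ) ^ (N + 1 + 1) *
        (Real.Gamma c * Real.Gamma (1 - c + a) * Real.Gamma (b + ((N + 1 : ℕ) : ℝ) - 1) *
            Real.Gamma (1 + (m : ℝ) - ((N + 1 : ℕ) : ℝ) - b + c) *
            Real.Gamma (((N + 1 : ℕ) : ℝ) - (m : ℝ) + b - c + a)) /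
        (Real.Gamma ((m : ℝ) + c) * Real.Gamma (1 - c + a - (m : ℝ)) * Real.Gamma (c - b) *
            Real.Gamma (b - c + a + ((N + 1 : ℕ) : ℝ)) * Real.Gamma b) =
      poch (c - b) m * poch (1 - c + a - m) m * poch b N /
        (poch c m * poch (1 + b - c - m) N * poch (a + b + ((N + 1 : ℕ) : ℝ) - m - c) m) := by
  set A := 1 - c + a - m with hAdef
  set D := a + b + ((N + 1 : ℕ) : ℝ) - m - c with hDdef
  set E := 1 + b - c - m with hEdef
  have hcb : ∀ z : ℤ, c - b ≠ z :=
    forall_int_ne_of_sub_eq_intCast (forall_int_ne_neg hE) (1 - m) (by rw [hEdef]; push_cast; ring)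
  have hE' : ∀ z : ℤ, 1 - E - N ≠ z :=
    forall_int_ne_of_sub_eq_intCast (forall_int_ne_neg hE) (1 - N) (by push_cast; ring)
  have hG1E : Real.Gamma (1 - E) = poch (c - b) m * Real.Gamma (c - b) := by
    rw [show 1 - E = c - b + m by rw [hEdef]; ring,
      Gamma_add_natCast (ne_neg_natCast_of_forall_int_ne hcb)]
  have hGE := Gamma_one_sub_sub_mul_poch (ne_neg_natCast_of_forall_int_ne hE')
  rw [hG1E] at hGE
  rw [show (m : ℝ) + c = c + m by ring, show 1 - c + a = A + m by ring,
    show b + ((N + 1 : ℕ) : ℝ) - 1 = b + N by push_cast; ring,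
    show 1 + (m : ℝ) - ((N + 1 : ℕ) : ℝ) - b + c = 1 - E - N by rw [hEdef]; push_cast; ring,
    show ((N + 1 : ℕ) : ℝ) - m + b - c + a = D by rw [hDdef]; ring,
    show b - c + a + ((N + 1 : ℕ) : ℝ) = D + m by rw [hDdef]; ring,
    Gamma_add_natCast (ne_neg_natCast_of_forall_int_ne hc),
    Gamma_add_natCast (ne_neg_natCast_of_forall_int_ne hA),
    Gamma_add_natCast (ne_neg_natCast_of_forall_int_ne hb),
    Gamma_add_natCast (ne_neg_natCast_of_forall_int_ne hD)]
  have hsign : (-1 : ℝ) ^ (N + 1 + 1) * (-1) ^ N = 1 := by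
    rw [← pow_add]; exact Even.neg_one_pow ⟨N + 1, by ring⟩
  field_simp [Gamma_ne_zero_of_forall_int_ne hc, Gamma_ne_zero_of_forall_int_ne hA,
    Gamma_ne_zero_of_forall_int_ne hb, Gamma_ne_zero_of_forall_int_ne hD,
    Gamma_ne_zero_of_forall_int_ne hcb, poch_ne_zero_of_forall_int_ne hc m,
    poch_ne_zero_of_forall_int_ne hD m, poch_ne_zero_of_forall_int_ne hE N]
  linear_combination ((-1) ^ (N + 1 + 1) * poch A m * poch b N) * hGE +
    (poch A m * poch b N * poch (c - b) m * Real.Gamma (c - b)) * hsign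

theorem saalschutz_n_balanced_general (m n : ℕ) (hn : 0 < n) (a b c : ℝ)
    (hb : ∀ z : ℤ, b ≠ (z : ℝ)) (hc : ∀ z : ℤ, c ≠ (z : ℝ))
    (hac : ∀ z : ℤ, a - c ≠ (z : ℝ)) (hbc : ∀ z : ℤ, b - c ≠ (z : ℝ))
    (habc : ∀ z : ℤ, a + b - c ≠ (z : ℝ)) :
    ∑ k ∈ range (m + 1),
        poch (-(m : ℝ)) k * poch a k * poch b k /
          (poch c k * poch (a + b + (n : ℝ) - (m : ℝ) - c) k * (k.factorial : ℝ)) =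
      (-1 : ℝ) ^ (n + 1) *
          (Real.Gamma c * Real.Gamma (1 - c + a) * Real.Gamma (b + (n : ℝ) - 1) *
              Real.Gamma (1 + (m : ℝ) - (n : ℝ) - b + c) *
              Real.Gamma ((n : ℝ) - (m : ℝ) + b - c + a)) /
          (Real.Gamma ((m : ℝ) + c) * Real.Gamma (1 - c + a - (m : ℝ)) * Real.Gamma (c - b) *
              Real.Gamma (b - c + a + (n : ℝ)) * Real.Gamma b) *
        ∑ k ∈ range n,
          poch (1 - (n : ℝ)) k * poch (1 - c + a) k * poch (1 - (m : ℝ) - c) k /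
            (poch (2 - b - (n : ℝ)) k * poch (1 - c + a - (m : ℝ)) k * (k.factorial : ℝ)) := by
  obtain ⟨N, rfl⟩ : ∃ N, n = N + 1 := ⟨n - 1, by omega⟩
  have hD : ∀ z : ℤ, a + b + ((N + 1 : ℕ) : ℝ) - m - c ≠ z :=
    forall_int_ne_of_sub_eq_intCast habc (N + 1 - m) (by push_cast; ring)
  have hE : ∀ z : ℤ, 1 + b - c - m ≠ z :=
    forall_int_ne_of_sub_eq_intCast hbc (1 - m) (by push_cast; ring)
  have hA : ∀ z : ℤ, 1 - c + a - m ≠ z :=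
    forall_int_ne_of_sub_eq_intCast hac (1 - m) (by push_cast; ring)
  have hB : ∀ z : ℤ, 1 - b - N ≠ z :=
    forall_int_ne_of_sub_eq_intCast (forall_int_ne_neg hb) (1 - N) (by push_cast; ring)
  rw [Gamma_quotient_eq_poch_quotient m N hb hc hA hD hE,
    show (1 : ℝ) - ((N + 1 : ℕ) : ℝ) = -N by push_cast; ring,
    show (2 : ℝ) - b - ((N + 1 : ℕ) : ℝ) = 1 - b - N by push_cast; ring]
  change hypergeom3F2 m (-m) a b c _ = _ * hypergeom3F2 N (-N) _ _ _ _
  rw [hypergeom3F2_sheppard m a b (poch_ne_zero_of_forall_int_ne hc m)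
      (poch_ne_zero_of_forall_int_ne hD m) (poch_ne_zero_of_forall_int_ne hE m),
    show a + b + ((N + 1 : ℕ) : ℝ) - m - c - a = 1 + b - c - m + N by push_cast; ring,
    hypergeom3F2_add_natCast_eq_sum_div m N b _ (poch_ne_zero_of_forall_int_ne hE N)
      (poch_ne_zero_of_forall_int_ne hE m),
    sum_poch_add_eq_sum_choose m N b _ (poch_ne_zero_of_forall_int_ne hD m),
    show a + b + ((N + 1 : ℕ) : ℝ) - m - c - b = 1 - c + a - m + N by push_cast; ring,
    sum_choose_poch_eq_hypergeom3F2 N m b _ _ (poch_ne_zero_of_forall_int_ne hA N)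
      (poch_ne_zero_of_forall_int_ne hB N),
    show 1 + b - c - m - b = 1 - m - c by ring]
  ring

/-- An `n`-balanced generalization of the Saalschütz theorem. -/
theorem saalschutz_n_balanced (m n : ℕ) (hm : 0 < m) (hn : 0 < n) (a b c : ℝ)
    (ha : ∀ z : ℤ, a ≠ (z : ℝ)) (hb : ∀ z : ℤ, b ≠ (z : ℝ)) (hc : ∀ z : ℤ, c ≠ (z : ℝ))
    (hac : ∀ z : ℤ, a - c ≠ (z : ℝ)) (hbc : ∀ z : ℤ, b - c ≠ (z : ℝ))
    (habc : ∀ z : ℤ, a + b - c ≠ (z : ℝ)) :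
    ∑ k ∈ range (m + 1),
        poch (-(m : ℝ)) k * poch a k * poch b k /
          (poch c k * poch (a + b + (n : ℝ) - (m : ℝ) - c) k * (k.factorial : ℝ)) =
      (-1 : ℝ) ^ (n + 1) *
          (Real.Gamma c * Real.Gamma (1 - c + a) * Real.Gamma (b + (n : ℝ) - 1) *
              Real.Gamma (1 + (m : ℝ) - (n : ℝ) - b + c) *
              Real.Gamma ((n : ℝ) - (m : ℝ) + b - c + a)) /
          (Real.Gamma ((m : ℝ) + c) * Real.Gamma (1 - c + a - (m : ℝ)) * Real.Gamma (c - b) *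
              Real.Gamma (b - c + a + (n : ℝ)) * Real.Gamma b) *
        ∑ k ∈ range n,
          poch (1 - (n : ℝ)) k * poch (1 - c + a) k * poch (1 - (m : ℝ) - c) k /
            (poch (2 - b - (n : ℝ)) k * poch (1 - c + a - (m : ℝ)) k * (k.factorial : ℝ)) :=
  saalschutz_n_balanced_general m n hn a b c hb hc hac hbc habc
end

section
/- Let m be a positive integer and let a, b, c be real numbers with m−a > 0 and c ≠ 0, such that none of a, b, c, a−b is an integer. Then Σ_{k=0}^{∞} (a)_k (b)_k (c+1)_k / ((c)_k (b+m+1)_k · k!) = Γ(m−a)·((m−a)·c + a·b)·Γ(b+m+1) / (c·Γ(m+1)·Γ(b+m−a+1)). -/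
/-!
Since `(c+1)_k / (c)_k = (c+k)/c`, the series is `∑ F_k (1 + k/c)`, where `F_k` are the terms of
`₂F₁(a, b; B; 1)` with `B = b + m + 1`. Telescoping `k (B - 1 + k) F_k` gives the first moment
`(m - a) ∑ k F_k = a b ∑ F_k`, so the series equals `(1 + a b / (c (m - a))) ₂F₁(a, b; B; 1)`, and
Gauss's summation theorem evaluates the `₂F₁`.

Gauss's theorem is proved by iterating the contiguous relation
`₂F₁(a, b; c; 1) = (c-a)(c-b)/(c(c-a-b)) ₂F₁(a, b; c+1; 1)`, itself a consequence of the first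
moment: after `n` steps the Pochhammer prefactor tends to the Gamma quotient by Euler's limit
formula, while `₂F₁(a, b; c+n; 1) → 1` by dominated convergence. Euler's limit formula also gives
`F_k = O(k^(a+b-c-1))`, hence convergence at `1`.
-/

open scoped BigOperators
open Finset

open Filter Topology Asymptotics Polynomial
open scoped Nat

theorem ascPochhammer_eval_eq_prod_range {S : Type*} [CommSemiring S] (x : S) (n : ℕ) :
    (ascPochhammer S n).eval x = ∏ j ∈ range n, (x + j) := by
  induction n with
  | zero => simp
  | succ n ih => rw [ascPochhammer_succ_eval, ih, prod_range_succ]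

theorem mul_ascPochhammer_eval_add_one {S : Type*} [CommSemiring S] (x : S) (n : ℕ) :
    x * (ascPochhammer S n).eval (x + 1) = (ascPochhammer S n).eval x * (x + n) := by
  rw [← ascPochhammer_succ_eval, ascPochhammer_succ_left, eval_mul, eval_X, eval_comp]
  simp

theorem ascPochhammer_eval_ne_zero {x : ℝ} (hx : ∀ m : ℕ, x ≠ -m) (n : ℕ) :
    (ascPochhammer ℝ n).eval x ≠ 0 := by
  rw [Ne, ascPochhammer_eval_eq_zero_iff]
  rintro ⟨k, -, hk⟩
  exact hx k (by linarith)

theorem abs_ascPochhammer_eval_le {x y : ℝ} (h : |x| ≤ y) (n : ℕ) :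
    |(ascPochhammer ℝ n).eval x| ≤ (ascPochhammer ℝ n).eval y := by
  rw [ascPochhammer_eval_eq_prod_range, ascPochhammer_eval_eq_prod_range, abs_prod]
  refine prod_le_prod (fun _ _ => abs_nonneg _) fun j _ => ?_
  calc |x + j| ≤ |x| + j := by simpa using abs_add_le x (j : ℝ)
    _ ≤ y + j := by linarith

theorem ascPochhammer_eval_le_of_le {x y : ℝ} (hx : 0 ≤ x) (h : x ≤ y) (n : ℕ) :
    (ascPochhammer ℝ n).eval x ≤ (ascPochhammer ℝ n).eval y :=
  (le_abs_self _).trans (abs_ascPochhammer_eval_le (by rwa [abs_of_nonneg hx]) n)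

theorem tendsto_ascPochhammer_eval_div_rpow_mul_factorial (x : ℝ) :
    Tendsto (fun n : ℕ => (ascPochhammer ℝ n).eval x / ((n : ℝ) ^ (x - 1) * n !)) atTop
      (𝓝 (Real.Gamma x)⁻¹) := by
  by_cases hx : ∃ m : ℕ, x = -m
  -- At a pole `Γ x = 0` (Mathlib's convention), and the Pochhammer symbol is eventually `0`.
  · obtain ⟨m, rfl⟩ := hx
    rw [Real.Gamma_neg_nat_eq_zero, inv_zero]
    refine tendsto_const_nhds.congr' ?_
    filter_upwards [eventually_gt_atTop m] with n hn
    rw [ascPochhammer_eval_neg_coe_nat_of_lt hn, zero_div]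
  push Not at hx
  have hlim := (tendsto_natCast_div_add_atTop x).mul ((Real.GammaSeq_tendsto_Gamma x).inv₀
    (Real.Gamma_ne_zero hx))
  rw [one_mul] at hlim
  refine hlim.congr' ?_
  filter_upwards [eventually_ne_atTop 0] with n hn
  have hn' : (0 : ℝ) < n := by positivity
  have hxn : (n : ℝ) + x ≠ 0 := fun h => hx n (by linarith)
  have hp := ascPochhammer_eval_ne_zero hx n
  rw [Real.GammaSeq, ← ascPochhammer_eval_eq_prod_range, ascPochhammer_succ_eval,
    show x = (x - 1) + 1 by ring, Real.rpow_add_one hn'.ne']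
  simp only [sub_add_cancel]
  field_simp
  ring

theorem tendsto_ascPochhammer_eval_ratio (x y z w : ℝ) (hz : ∀ m : ℕ, z ≠ -m)
    (hw : ∀ m : ℕ, w ≠ -m) :
    Tendsto (fun n : ℕ => (ascPochhammer ℝ n).eval x * (ascPochhammer ℝ n).eval y /
        ((ascPochhammer ℝ n).eval z * (ascPochhammer ℝ n).eval w) * (n : ℝ) ^ (z + w - x - y))
      atTop (𝓝 (Real.Gamma z * Real.Gamma w / (Real.Gamma x * Real.Gamma y))) := by
  have euler := tendsto_ascPochhammer_eval_div_rpow_mul_factorial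
  have hlim := ((euler x).mul (euler y)).div ((euler z).mul (euler w))
    (mul_ne_zero (inv_ne_zero (Real.Gamma_ne_zero hz)) (inv_ne_zero (Real.Gamma_ne_zero hw)))
  rw [show (Real.Gamma x)⁻¹ * (Real.Gamma y)⁻¹ / ((Real.Gamma z)⁻¹ * (Real.Gamma w)⁻¹) =
    Real.Gamma z * Real.Gamma w / (Real.Gamma x * Real.Gamma y) by
      simp only [div_eq_mul_inv, mul_inv, inv_inv]; ring] at hlim
  refine hlim.congr' ?_
  filter_upwards [eventually_ne_atTop 0] with n hn
  have hn' : (0 : ℝ) < n := by positivity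
  have hpz := ascPochhammer_eval_ne_zero hz n
  have hpw := ascPochhammer_eval_ne_zero hw n
  rw [show z + w - x - y = ((z - 1) + (w - 1)) - ((x - 1) + (y - 1)) by ring,
    Real.rpow_sub hn', Real.rpow_add hn', Real.rpow_add hn', Pi.div_apply]
  field_simp

theorem ordinaryHypergeometricCoefficient_eq_div (a b c : ℝ) (n : ℕ) :
    ordinaryHypergeometricCoefficient a b c n = (ascPochhammer ℝ n).eval a *
      (ascPochhammer ℝ n).eval b / ((ascPochhammer ℝ n).eval c * (ascPochhammer ℝ n).eval 1) := by
  rw [ascPochhammer_eval_one]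
  ring

theorem ordinaryHypergeometricCoefficient_isBigO {a b c : ℝ} (hc : ∀ m : ℕ, c ≠ -m) :
    ordinaryHypergeometricCoefficient a b c =O[atTop] fun n : ℕ => (n : ℝ) ^ (a + b - c - 1) := by
  have hlim := tendsto_ascPochhammer_eval_ratio a b c 1 hc
    fun m => by linarith [m.cast_nonneg (α := ℝ)]
  refine ((hlim.isBigO_one ℝ).mul
    (isBigO_refl (fun n : ℕ => (n : ℝ) ^ (a + b - c - 1)) atTop)).congr'
    ?_ (.of_forall fun n => one_mul _)
  filter_upwards [eventually_ne_atTop 0] with n hn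
  have hn' : (0 : ℝ) < n := by positivity
  rw [← ordinaryHypergeometricCoefficient_eq_div, mul_assoc, ← Real.rpow_add hn',
    show c + 1 - a - b + (a + b - c - 1) = 0 by ring, Real.rpow_zero, mul_one]

theorem summable_ordinaryHypergeometricCoefficient {a b c : ℝ} (hc : ∀ m : ℕ, c ≠ -m)
    (h : a + b < c) : Summable (ordinaryHypergeometricCoefficient a b c) :=
  summable_of_isBigO_nat (Real.summable_nat_rpow.2 (by linarith))
    (ordinaryHypergeometricCoefficient_isBigO hc)

theorem natCast_mul_ordinaryHypergeometricCoefficient_isBigO {a b c : ℝ}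
    (hc : ∀ m : ℕ, c ≠ -m) (h : a + b < c) :
    (fun n : ℕ => (n : ℝ) * ordinaryHypergeometricCoefficient a b c n) =O[atTop]
      fun n : ℕ => (n : ℝ) ^ (a + b - c) := by
  refine ((isBigO_refl (fun n : ℕ => (n : ℝ)) atTop).mul
    (ordinaryHypergeometricCoefficient_isBigO hc)).congr_right fun n => ?_
  rw [← Real.rpow_one_add' n.cast_nonneg (by linarith)]
  ring_nf

theorem summable_natCast_mul_ordinaryHypergeometricCoefficient {a b c : ℝ}
    (hc : ∀ m : ℕ, c ≠ -m) (h : a + b + 1 < c) :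
    Summable fun n : ℕ => (n : ℝ) * ordinaryHypergeometricCoefficient a b c n :=
  summable_of_isBigO_nat (Real.summable_nat_rpow.2 (by linarith))
    (natCast_mul_ordinaryHypergeometricCoefficient_isBigO hc (by linarith))

theorem ordinaryHypergeometricCoefficient_succ (a b : ℝ) {c : ℝ} {n : ℕ} (hc : c + n ≠ 0) :
    (n + 1) * (c + n) * ordinaryHypergeometricCoefficient a b c (n + 1) =
      (a + n) * (b + n) * ordinaryHypergeometricCoefficient a b c n := by
  by_cases hp : (ascPochhammer ℝ n).eval c = 0
  · simp [ordinaryHypergeometricCoefficient, ascPochhammer_succ_eval, hp]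
  simp only [ordinaryHypergeometricCoefficient, ascPochhammer_succ_eval, Nat.factorial_succ]
  push_cast
  field_simp

theorem isBigO_const_add_natCast (x : ℝ) :
    (fun n : ℕ => x + n) =O[atTop] fun n : ℕ => (n : ℝ) := by
  refine IsBigO.of_bound 2 ?_
  filter_upwards [eventually_ge_atTop ⌈|x|⌉₊] with n hn
  have hx : |x| ≤ n := Nat.ceil_le.1 hn
  simp only [Real.norm_eq_abs, Nat.abs_cast]
  linarith [abs_add_le x n, abs_of_nonneg (n.cast_nonneg (α := ℝ))]

theorem tsum_natCast_mul_ordinaryHypergeometricCoefficient {a b c : ℝ} (hc : ∀ m : ℕ, c ≠ -m)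
    (h : a + b + 1 < c) :
    (c - 1 - a - b) * ∑' n : ℕ, (n : ℝ) * ordinaryHypergeometricCoefficient a b c n =
      a * b * ∑' n : ℕ, ordinaryHypergeometricCoefficient a b c n := by
  set F := ordinaryHypergeometricCoefficient a b c
  set g : ℕ → ℝ := fun n => (c - 1 + n) * (n * F n)
  have hg : ∀ n : ℕ, g n - g (n + 1) = (c - 1 - a - b) * (n * F n) - a * b * F n := by
    intro n
    have := ordinaryHypergeometricCoefficient_succ a b (c := c) (n := n)
      fun h0 => hc n (eq_neg_of_add_eq_zero_left h0)
    simp only [g]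
    push_cast
    linear_combination -this
  have hg_lim : Tendsto g atTop (𝓝 0) := by
    refine IsBigO.trans_tendsto ?_
      ((tendsto_rpow_neg_atTop (y := c - 1 - a - b) (by linarith)).comp tendsto_natCast_atTop_atTop)
    refine ((isBigO_const_add_natCast _).mul
      (natCast_mul_ordinaryHypergeometricCoefficient_isBigO hc (by linarith))).congr_right
      fun n => ?_
    rw [Function.comp_apply, ← Real.rpow_one_add' n.cast_nonneg (by linarith)]
    ring_nf
  have hnF : Summable fun n : ℕ => (c - 1 - a - b) * (n * F n) :=
    (summable_natCast_mul_ordinaryHypergeometricCoefficient hc h).mul_left _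
  have hF : Summable fun n => a * b * F n :=
    (summable_ordinaryHypergeometricCoefficient hc (by linarith)).mul_left _
  have htel : HasSum (fun n => (c - 1 - a - b) * (n * F n) - a * b * F n) 0 := by
    rw [(hnF.sub hF).hasSum_iff_tendsto_nat]
    simp only [← hg, sum_range_sub']
    simpa [g] using hg_lim.const_sub (g 0)
  rw [← sub_eq_zero, ← tsum_mul_left, ← tsum_mul_left, ← hnF.tsum_sub hF]
  exact htel.tsum_eq

theorem tsum_ordinaryHypergeometricCoefficient_mul_add_div {a b c : ℝ} (hc : ∀ m : ℕ, c ≠ -m)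
    (h : a + b + 1 < c) {d : ℝ} (hd : d ≠ 0) :
    ∑' n : ℕ, ordinaryHypergeometricCoefficient a b c n * ((d + n) / d) =
      (1 + a * b / (d * (c - 1 - a - b))) *
        ∑' n : ℕ, ordinaryHypergeometricCoefficient a b c n := by
  have hF := summable_ordinaryHypergeometricCoefficient (a := a) (b := b) hc (by linarith)
  have hnF := (summable_natCast_mul_ordinaryHypergeometricCoefficient hc h).mul_left d⁻¹
  have hmoment := tsum_natCast_mul_ordinaryHypergeometricCoefficient hc h
  have hcab : c - 1 - a - b ≠ 0 := by linarith
  calc ∑' n : ℕ, ordinaryHypergeometricCoefficient a b c n * ((d + n) / d)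
      = ∑' n : ℕ, (ordinaryHypergeometricCoefficient a b c n +
          d⁻¹ * (n * ordinaryHypergeometricCoefficient a b c n)) :=
        tsum_congr fun n => by field_simp
    _ = _ := by
      rw [hF.tsum_add hnF, tsum_mul_left]
      generalize ∑' n : ℕ, ordinaryHypergeometricCoefficient a b c n = S at *
      generalize ∑' n : ℕ, (n : ℝ) * ordinaryHypergeometricCoefficient a b c n = T at *
      field_simp
      linear_combination hmoment

theorem ordinaryHypergeometric_one_eq_tsum (a b c : ℝ) :
    ₂F₁ a b c (1 : ℝ) = ∑' n : ℕ, ordinaryHypergeometricCoefficient a b c n := by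
  simp [ordinaryHypergeometric_eq_tsum]

theorem ascPochhammer_eval_add_one_div {x : ℝ} (hx : ∀ m : ℕ, x ≠ -m) (n : ℕ) :
    (ascPochhammer ℝ n).eval (x + 1) / (ascPochhammer ℝ n).eval x = (x + n) / x := by
  have hx0 : x ≠ 0 := by simpa using hx 0
  rw [div_eq_div_iff (ascPochhammer_eval_ne_zero hx n) hx0]
  linear_combination mul_ascPochhammer_eval_add_one x n

theorem ordinaryHypergeometric_one_contiguous {a b c : ℝ} (hc : ∀ m : ℕ, c ≠ -m)
    (h : a + b < c) :
    ₂F₁ a b c (1 : ℝ) = (c - a) * (c - b) / (c * (c - a - b)) * ₂F₁ a b (c + 1) (1 : ℝ) := by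
  have hc1 : ∀ m : ℕ, c + 1 ≠ -m := fun m h' => hc (m + 1) (by push_cast; linarith)
  have hc0 : c ≠ 0 := by simpa using hc 0
  have hcab : c - a - b ≠ 0 := by linarith
  have hterm (n : ℕ) : ordinaryHypergeometricCoefficient a b c n =
      ordinaryHypergeometricCoefficient a b (c + 1) n * ((c + n) / c) := by
    rw [← ascPochhammer_eval_add_one_div hc n]
    have := ascPochhammer_eval_ne_zero hc1 n
    field_simp
  rw [ordinaryHypergeometric_one_eq_tsum, ordinaryHypergeometric_one_eq_tsum, tsum_congr hterm,
    tsum_ordinaryHypergeometricCoefficient_mul_add_div hc1 (by linarith) hc0,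
    show c + 1 - 1 - a - b = c - a - b by ring]
  congr 1
  field_simp
  ring

theorem tendsto_ascPochhammer_eval_add_natCast_atTop (x : ℝ) {k : ℕ} (hk : k ≠ 0) :
    Tendsto (fun n : ℕ => (ascPochhammer ℝ k).eval (x + n)) atTop atTop := by
  have hdeg : 0 < (ascPochhammer ℝ k).degree := by
    rw [← natDegree_pos_iff_degree_pos, ascPochhammer_natDegree]
    exact Nat.pos_of_ne_zero hk
  have hlead : 0 ≤ (ascPochhammer ℝ k).leadingCoeff := by
    rw [(monic_ascPochhammer ℝ k).leadingCoeff]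
    exact zero_le_one
  exact (tendsto_atTop_of_leadingCoeff_nonneg _ hdeg hlead).comp
    (tendsto_atTop_add_const_left _ x tendsto_natCast_atTop_atTop)

theorem tendsto_ordinaryHypergeometric_one_add_natCast (a b c : ℝ) :
    Tendsto (fun n : ℕ => ₂F₁ a b (c + n) (1 : ℝ)) atTop (𝓝 1) := by
  set M := max |a| |b|
  obtain ⟨N, hN⟩ := exists_nat_gt (2 * M + 1 - c)
  have hM : 0 ≤ M := (abs_nonneg a).trans (le_max_left _ _)
  have hcN : 0 < c + N := by linarith
  simp only [ordinaryHypergeometric_one_eq_tsum]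
  rw [show (1 : ℝ) = ∑' k : ℕ, if k = 0 then 1 else 0 by simp]
  refine tendsto_tsum_of_dominated_convergence
    (bound := ordinaryHypergeometricCoefficient M M (c + N))
    (summable_ordinaryHypergeometricCoefficient (fun m h' => by linarith [m.cast_nonneg (α := ℝ)])
      (by linarith)) (fun k => ?_) ?_
  · rcases eq_or_ne k 0 with rfl | hk
    · simp [ordinaryHypergeometricCoefficient]
    simp only [hk, if_false]
    simpa using tendsto_const_nhds (x := ((k ! : ℝ)⁻¹ * (ascPochhammer ℝ k).eval a *
      (ascPochhammer ℝ k).eval b)) |>.mul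
        (tendsto_ascPochhammer_eval_add_natCast_atTop c hk).inv_tendsto_atTop
  · filter_upwards [eventually_ge_atTop N] with n hn k
    have ha := abs_ascPochhammer_eval_le (le_max_left |a| |b|) k
    have hb := abs_ascPochhammer_eval_le (le_max_right |a| |b|) k
    have hc := (ascPochhammer_eval_le_of_le (y := c + n) hcN.le (by gcongr) k).trans
      (le_abs_self _)
    have hMk := (abs_nonneg _).trans ha
    have hpos := ascPochhammer_pos k _ hcN
    simp only [ordinaryHypergeometricCoefficient, norm_mul, norm_inv, Real.norm_eq_abs,
      Nat.abs_cast]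
    gcongr

/-- Gauss's summation theorem. -/
theorem ordinaryHypergeometric_one {a b c : ℝ} (hc : ∀ m : ℕ, c ≠ -m) (h : a + b < c) :
    ₂F₁ a b c (1 : ℝ) =
      Real.Gamma c * Real.Gamma (c - a - b) / (Real.Gamma (c - a) * Real.Gamma (c - b)) := by
  have hcab : ∀ m : ℕ, c - a - b ≠ -m := fun m h' => by linarith [m.cast_nonneg (α := ℝ)]
  set P : ℕ → ℝ := fun n => (ascPochhammer ℝ n).eval (c - a) * (ascPochhammer ℝ n).eval (c - b) /
    ((ascPochhammer ℝ n).eval c * (ascPochhammer ℝ n).eval (c - a - b))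
  have hiter (n : ℕ) : P n * ₂F₁ a b (c + n) (1 : ℝ) = ₂F₁ a b c (1 : ℝ) := by
    induction n with
    | zero => simp [P]
    | succ n ih =>
      have hcn : ∀ m : ℕ, c + n ≠ -m := fun m h' => hc (n + m) (by push_cast; linarith)
      have hcabn : c + n - a - b ≠ 0 := by linarith [n.cast_nonneg (α := ℝ)]
      have hcabn' : c - a - b + n ≠ 0 := by linarith [n.cast_nonneg (α := ℝ)]
      have hcn0 : c + n ≠ 0 := by simpa using hcn 0
      have hpc := ascPochhammer_eval_ne_zero hc n
      have hpcab := ascPochhammer_eval_ne_zero hcab n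
      rw [← ih, ordinaryHypergeometric_one_contiguous hcn (by linarith [n.cast_nonneg (α := ℝ)]),
        show c + ((n + 1 : ℕ) : ℝ) = c + n + 1 by push_cast; ring]
      simp only [P, ascPochhammer_succ_eval]
      field_simp
      ring
  have hP : Tendsto P atTop
      (𝓝 (Real.Gamma c * Real.Gamma (c - a - b) / (Real.Gamma (c - a) * Real.Gamma (c - b)))) := by
    have := tendsto_ascPochhammer_eval_ratio (c - a) (c - b) c (c - a - b) hc hcab
    rw [show c + (c - a - b) - (c - a) - (c - b) = 0 by ring] at this
    simpa using this
  have hlim := hP.mul (tendsto_ordinaryHypergeometric_one_add_natCast a b c)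
  rw [mul_one] at hlim
  exact tendsto_nhds_unique (tendsto_const_nhds.congr fun n => (hiter n).symm) hlim

theorem rosengren_special_general (m : ℕ) (a b c : ℝ)
    (hconv : (m : ℝ) - a > 0) (hc0 : c ≠ 0)
    (hb : ∀ z : ℤ, b ≠ (z : ℝ)) (hc : ∀ z : ℤ, c ≠ (z : ℝ)) :
    ∑' k : ℕ,
        poch a k * poch b k * poch (c + 1) k /
          (poch c k * poch (b + (m : ℝ) + 1) k * (k.factorial : ℝ)) =
      Real.Gamma ((m : ℝ) - a) * (((m : ℝ) - a) * c + a * b) *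
          Real.Gamma (b + (m : ℝ) + 1) /
        (c * Real.Gamma ((m : ℝ) + 1) * Real.Gamma (b + (m : ℝ) - a + 1)) := by
  have hc' : ∀ k : ℕ, c ≠ -k := fun k => by exact_mod_cast hc (-k)
  have hB : ∀ k : ℕ, b + m + 1 ≠ -k := fun k h => hb (-(m + 1 + k)) (by push_cast; linarith)
  have hterm (k : ℕ) : poch a k * poch b k * poch (c + 1) k /
      (poch c k * poch (b + m + 1) k * k !) =
      ordinaryHypergeometricCoefficient a b (b + m + 1) k * ((c + k) / c) := by
    rw [← ascPochhammer_eval_add_one_div hc' k]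
    have := ascPochhammer_eval_ne_zero hc' k
    simp only [poch]
    field_simp
  rw [tsum_congr hterm, tsum_ordinaryHypergeometricCoefficient_mul_add_div hB (by linarith) hc0,
    ← ordinaryHypergeometric_one_eq_tsum, ordinaryHypergeometric_one hB (by linarith),
    show b + m + 1 - 1 - a - b = m - a by ring, show b + m + 1 - a - b = m - a + 1 by ring,
    show b + m + 1 - b = m + 1 by ring, show b + m + 1 - a = b + m - a + 1 by ring,
    Real.Gamma_add_one hconv.ne']
  have := (Real.Gamma_pos_of_pos hconv).ne'
  have := (Real.Gamma_pos_of_pos (by linarith : (0 : ℝ) < m + 1)).ne'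
  field_simp

/-- A closed-form special case of Rosengren's identity: `₃F₂(a, b, c+1; c, b+m+1; 1)`. -/
theorem rosengren_special (m : ℕ) (hm : 0 < m) (a b c : ℝ)
    (hconv : (m : ℝ) - a > 0) (hc0 : c ≠ 0)
    (ha : ∀ z : ℤ, a ≠ (z : ℝ)) (hb : ∀ z : ℤ, b ≠ (z : ℝ)) (hc : ∀ z : ℤ, c ≠ (z : ℝ))
    (hab : ∀ z : ℤ, a - b ≠ (z : ℝ)) :
    ∑' k : ℕ,
        poch a k * poch b k * poch (c + 1) k /
          (poch c k * poch (b + (m : ℝ) + 1) k * (k.factorial : ℝ)) =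
      Real.Gamma ((m : ℝ) - a) * (((m : ℝ) - a) * c + a * b) *
          Real.Gamma (b + (m : ℝ) + 1) /
        (c * Real.Gamma ((m : ℝ) + 1) * Real.Gamma (b + (m : ℝ) - a + 1)) :=
  rosengren_special_general m a b c hconv hc0 hb hc
end

section
/- Let m, n, j, p be positive integers with m ≥ n. Then Σ_{k=0}^{min(j−1, n−1)} Γ(m+k) / (Γ(j−k) · (k!)² · Γ(p+k) · Γ(n−k)) = [Γ(m) / (Γ(p−1+j)·Γ(n)·Γ(j))] · Σ_{k=0}^{min(m, n, p−1+n)−1} (−1)^k · Γ(n+m−1−k) · Γ(p+j+n−2−k) / (Γ(p−1+n−k) · k! · Γ(m−k) · Γ(n−k)). -/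
/-!
Write `m = c + 1`, `j = a + 1`, `n = b + 1`, `p = q + 1`, so that every Gamma value is a
factorial, and put `x = c - q`. Writing `x^(i)` for the falling factorial, both sides become
multiples of the single sum `∑ᵢ C(b,i) C(a+b-i,b) x^(i) (q+a)^(a-i)`. On the left, expand
`(c+k)^(k) = (x + (q+k))^(k)` by Chu–Vandermonde and collapse the sum over `k` with
`∑ₖ C(a,k) C(b,k) C(k,i) = C(b,i) C(a+b-i,b)`. On the right, expand `(b+c-k)^(b)` the same way;
the remaining alternating sum over `k` is a `b`-th backward difference of a falling factorial.
Both reductions are polynomial identities in `x`, valid in any commutative ring.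
-/

open Finset Polynomial fwdDiff

theorem Nat.sum_choose_mul_choose_mul_choose {a b i : ℕ} (hi : i ≤ b) :
    ∑ k ∈ range (b + 1), a.choose k * b.choose k * k.choose i =
      b.choose i * (a + b - i).choose b := by
  have hterm : ∀ k ∈ range (b + 1), a.choose k * b.choose k * k.choose i =
      b.choose i * (a.choose k * (b - i).choose (b - k)) := by
    intro k hk
    have hkb := Nat.lt_succ_iff.mp (mem_range.mp hk)
    rcases le_or_gt i k with hik | hki
    · rw [mul_assoc, Nat.choose_mul hik,
        Nat.choose_symm_of_eq_add (by omega : b - i = k - i + (b - k))]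
      ring
    · rw [Nat.choose_eq_zero_of_lt hki, Nat.choose_eq_zero_of_lt (by omega : b - i < b - k)]
      ring
  rw [sum_congr rfl hterm, ← mul_sum, show a + b - i = a + (b - i) by omega, Nat.add_choose_eq,
    Nat.sum_antidiagonal_eq_sum_range_succ_mk]

theorem Nat.choose_mul_choose_mul_descFactorial_mul_descFactorial (a k i q : ℕ) :
    a.choose k * k.choose i * ((q + k).descFactorial (k - i) * (q + a).descFactorial (a - k)) =
      a.choose k * k.choose i * (q + a).descFactorial (a - i) := by
  rcases le_or_gt k a with hka | hak
  · rcases le_or_gt i k with hik | hki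
    · have h := Nat.descFactorial_mul_descFactorial (n := q + a) (show a - k ≤ a - i by omega)
      rw [show q + a - (a - k) = q + k by omega, show a - i - (a - k) = k - i by omega] at h
      rw [h]
    · simp [Nat.choose_eq_zero_of_lt hki]
  · simp [Nat.choose_eq_zero_of_lt hak]

theorem Nat.cast_factorial_eq_mul_descFactorial {R : Type*} [Semiring R] {n k : ℕ}
    (h : k ≤ n) : (n.factorial : R) = (n - k).factorial * n.descFactorial k := by
  rw [← Nat.cast_mul, Nat.factorial_mul_descFactorial h]

theorem Nat.cast_factorial_eq_choose_mul {R : Type*} [Semiring R] {n k : ℕ} (h : k ≤ n) :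
    (n.factorial : R) = n.choose k * k.factorial * (n - k).factorial := by
  rw [← Nat.cast_mul, ← Nat.cast_mul, Nat.choose_mul_factorial_mul_factorial h]

section DescPochhammer

variable {R : Type*} [CommRing R]

theorem descPochhammer_eval_add_natCast (x : R) (n k : ℕ) :
    (descPochhammer R k).eval (x + n) =
      ∑ i ∈ range (k + 1), (k.choose i : R) * (descPochhammer R i).eval x *
        (n.descFactorial (k - i) : R) := by
  have h (y : R) (d : ℕ) : (descPochhammer R d).eval y = (descPochhammer ℤ d).smeval y := by
    rw [← descPochhammer_map (algebraMap ℤ R), eval_map_algebraMap, aeval_eq_smeval]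
  rw [h, Ring.descPochhammer_smeval_add _ (Commute.all x n),
    Nat.sum_antidiagonal_eq_sum_range_succ_mk]
  refine sum_congr rfl fun i _ => ?_
  rw [h, ← descPochhammer_smeval_eq_descFactorial, mul_assoc]

theorem fwdDiff_neg_one_descPochhammer_eval (d : ℕ) :
    Δ_[(-1 : R)] (fun y : R => (descPochhammer R (d + 1)).eval y) =
      fun y => -((d + 1 : ℕ) : R) * (descPochhammer R d).eval (y - 1) := by
  ext y
  rw [fwdDiff, ← sub_eq_add_neg, descPochhammer_succ_eval, descPochhammer_succ_left, eval_mul,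
    eval_comp]
  simp only [eval_X, eval_sub, eval_one]
  push_cast
  ring

theorem fwdDiff_neg_one_iter_descPochhammer_eval (b d : ℕ) :
    (Δ_[(-1 : R)])^[b] (fun y : R => (descPochhammer R d).eval y) =
      fun y : R =>
        (-1) ^ b * (d.descFactorial b : R) * (descPochhammer R (d - b)).eval (y - b) := by
  induction b generalizing d with
  | zero => simp
  | succ b ih =>
    rw [Function.iterate_succ_apply]
    cases d with
    | zero =>
      ext y
      simp [fwdDiff_iter_eq_sum_shift]
    | succ d =>
      have shift : Δ_[(-1 : R)] (fun y : R => (descPochhammer R (d + 1)).eval y) =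
          (-((d + 1 : ℕ) : R)) • fun y => (fun r => (descPochhammer R d).eval r) (y + -1) := by
        rw [fwdDiff_neg_one_descPochhammer_eval]
        ext y
        simp [sub_eq_add_neg]
      ext y
      rw [shift, fwdDiff_iter_const_smul, Pi.smul_apply,
        fwdDiff_iter_comp_add (-1 : R) (fun r : R => (descPochhammer R d).eval r), ih,
        Nat.succ_descFactorial_succ, Nat.add_sub_add_right]
      push_cast
      rw [smul_eq_mul, show y + -1 - (b : R) = y - (b + 1) by ring]
      ring

theorem sum_neg_one_pow_mul_choose_mul_descPochhammer_eval_sub (y : R) (b d : ℕ) :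
    ∑ k ∈ range (b + 1), (-1) ^ k * (b.choose k : R) * (descPochhammer R d).eval (y - k) =
      (d.descFactorial b : R) * (descPochhammer R (d - b)).eval (y - b) := by
  have h := congrFun (fwdDiff_neg_one_iter_descPochhammer_eval (R := R) b d) y
  rw [fwdDiff_iter_eq_sum_shift] at h
  have hsq (t : ℕ) : (-1 : R) ^ t * (-1) ^ t = 1 := pow_mul_pow_eq_one _ (by norm_num)
  calc _ = (-1) ^ b * ∑ k ∈ range (b + 1),
          ((-1) ^ (b - k) * (b.choose k : ℤ)) • (descPochhammer R d).eval (y + k • -1) := by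
        rw [mul_sum]
        refine sum_congr rfl fun k hk => ?_
        rw [← pow_mul_pow_sub (-1 : R) (Nat.lt_succ_iff.mp (mem_range.mp hk))]
        simp only [zsmul_eq_mul, nsmul_eq_mul, Int.cast_mul, Int.cast_pow, Int.cast_neg,
          Int.cast_one, Int.cast_natCast, mul_neg_one, ← sub_eq_add_neg]
        linear_combination
          -(-1 : R) ^ k * (b.choose k : R) * (descPochhammer R d).eval (y - k) * hsq (b - k)
    _ = _ := by rw [h, ← mul_assoc, ← mul_assoc, hsq, one_mul]

theorem sum_choose_mul_choose_mul_descPochhammer_eval_add (x : R) (a b q : ℕ) :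
    ∑ k ∈ range (b + 1), (a.choose k * b.choose k : R) *
        (descPochhammer R k).eval (x + (q + k : ℕ)) * ((q + a).descFactorial (a - k) : R) =
      ∑ i ∈ range (b + 1), (b.choose i * (a + b - i).choose b : R) *
        (descPochhammer R i).eval x * ((q + a).descFactorial (a - i) : R) := by
  have hterm : ∀ k ∈ range (b + 1), (a.choose k * b.choose k : R) *
      (descPochhammer R k).eval (x + (q + k : ℕ)) * ((q + a).descFactorial (a - k) : R) =
      ∑ i ∈ range (b + 1), ((a.choose k * b.choose k * k.choose i : ℕ) : R) *
        (descPochhammer R i).eval x * ((q + a).descFactorial (a - i) : R) := by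
    intro k hk
    have hkb := Nat.lt_succ_iff.mp (mem_range.mp hk)
    rw [descPochhammer_eval_add_natCast, mul_sum, sum_mul,
      ← sum_subset (range_subset_range.mpr (by omega : k + 1 ≤ b + 1))]
    · refine sum_congr rfl fun i _ => ?_
      have h := congrArg (Nat.cast (R := R))
        (Nat.choose_mul_choose_mul_descFactorial_mul_descFactorial a k i q)
      push_cast at h ⊢
      linear_combination (b.choose k : R) * (descPochhammer R i).eval x * h
    · intro i _ hik
      rw [mem_range, not_lt] at hik
      simp [Nat.choose_eq_zero_of_lt (by omega : k < i)]
  rw [sum_congr rfl hterm, sum_comm]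
  refine sum_congr rfl fun i hi => ?_
  rw [← sum_mul, ← sum_mul, ← Nat.cast_sum,
    Nat.sum_choose_mul_choose_mul_choose (Nat.lt_succ_iff.mp (mem_range.mp hi))]
  push_cast
  ring

theorem sum_neg_one_pow_mul_choose_mul_descPochhammer_eval_add (x : R) (a b q : ℕ) :
    ∑ k ∈ range (b + 1), (-1) ^ k * (b.choose k : R) *
        (descPochhammer R b).eval (x + (q + b - k : ℕ)) * ((q + a + b - k).descFactorial a : R) =
      (b.factorial : R) * ∑ i ∈ range (b + 1), (b.choose i * (a + b - i).choose b : R) *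
        (descPochhammer R i).eval x * ((q + a).descFactorial (a - i) : R) := by
  have hterm : ∀ k ∈ range (b + 1), (-1) ^ k * (b.choose k : R) *
      (descPochhammer R b).eval (x + (q + b - k : ℕ)) * ((q + a + b - k).descFactorial a : R) =
      ∑ i ∈ range (b + 1), (b.choose i : R) * (descPochhammer R i).eval x *
        ((-1) ^ k * (b.choose k : R) *
          (descPochhammer R (a + b - i)).eval ((q + a + b : ℕ) - k : R)) := by
    intro k hk
    have hkb := Nat.lt_succ_iff.mp (mem_range.mp hk)
    rw [descPochhammer_eval_add_natCast, mul_sum, sum_mul]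
    refine sum_congr rfl fun i hi => ?_
    have hib := Nat.lt_succ_iff.mp (mem_range.mp hi)
    have h :=
      Nat.descFactorial_mul_descFactorial (n := q + a + b - k) (show a ≤ a + b - i by omega)
    rw [show q + a + b - k - a = q + b - k by omega, show a + b - i - a = b - i by omega] at h
    rw [← Nat.cast_sub (by omega), descPochhammer_eval_eq_descFactorial, ← h]
    push_cast
    ring
  rw [sum_congr rfl hterm, sum_comm, mul_sum]
  refine sum_congr rfl fun i hi => ?_
  have hib := Nat.lt_succ_iff.mp (mem_range.mp hi)
  rw [← mul_sum, sum_neg_one_pow_mul_choose_mul_descPochhammer_eval_sub,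
    show ((q + a + b : ℕ) : R) - b = ((q + a : ℕ) : R) by push_cast; ring,
    descPochhammer_eval_eq_descFactorial, Nat.descFactorial_eq_factorial_mul_choose,
    show a + b - i - b = a - i by omega]
  push_cast
  ring

theorem descPochhammer_sum_transform (x : R) (a b q : ℕ) :
    (b.factorial : R) * ∑ k ∈ range (b + 1), (a.choose k * b.choose k : R) *
        (descPochhammer R k).eval (x + (q + k : ℕ)) * ((q + a).descFactorial (a - k) : R) =
      ∑ k ∈ range (b + 1), (-1) ^ k * (b.choose k : R) *
        (descPochhammer R b).eval (x + (q + b - k : ℕ)) *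
        ((q + a + b - k).descFactorial a : R) := by
  rw [sum_choose_mul_choose_mul_descPochhammer_eval_add,
    sum_neg_one_pow_mul_choose_mul_descPochhammer_eval_add]

end DescPochhammer

theorem sum_factorial_div_eq_sum_descPochhammer (a b q c : ℕ) :
    ∑ k ∈ range (min (a + 1) (b + 1)), ((c + k).factorial : ℝ) /
        ((a - k).factorial * (k.factorial : ℝ) ^ 2 * (q + k).factorial * (b - k).factorial) =
      (c.factorial : ℝ) / ((q + a).factorial * b.factorial * a.factorial) *
        ∑ k ∈ range (b + 1), (a.choose k * b.choose k : ℝ) *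
          (descPochhammer ℝ k).eval ((c - q : ℝ) + (q + k : ℕ)) *
          ((q + a).descFactorial (a - k) : ℝ) := by
  rw [mul_sum, ← sum_subset (s₂ := range (b + 1)) (range_subset_range.mpr (min_le_right _ _))]
  · refine sum_congr rfl fun k hk => ?_
    rw [mem_range, lt_min_iff] at hk
    have hka : k ≤ a := by omega
    have hkb : k ≤ b := by omega
    have hca : (a.choose k : ℝ) ≠ 0 := Nat.cast_ne_zero.mpr (Nat.choose_pos hka).ne'
    have hcb : (b.choose k : ℝ) ≠ 0 := Nat.cast_ne_zero.mpr (Nat.choose_pos hkb).ne'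
    have hd : ((q + a).descFactorial (a - k) : ℝ) ≠ 0 :=
      Nat.cast_ne_zero.mpr (Nat.descFactorial_pos.mpr (by omega)).ne'
    rw [show (c - q : ℝ) + ((q + k : ℕ) : ℝ) = ((c + k : ℕ) : ℝ) by push_cast; ring,
      descPochhammer_eval_eq_descFactorial,
      Nat.cast_factorial_eq_mul_descFactorial (Nat.le_add_left k c), Nat.add_sub_cancel,
      Nat.cast_factorial_eq_mul_descFactorial (show a - k ≤ q + a by omega),
      show q + a - (a - k) = q + k by omega,
      Nat.cast_factorial_eq_choose_mul hka, Nat.cast_factorial_eq_choose_mul hkb]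
    field_simp
  · intro k hkb hk
    rw [mem_range] at hkb hk
    simp [Nat.choose_eq_zero_of_lt (show a < k by omega)]

theorem sum_neg_one_pow_factorial_div_eq_sum_descPochhammer (a b q c : ℕ) (hbc : b ≤ c) :
    ∑ k ∈ range (b + 1), (-1 : ℝ) ^ k * (b + c - k).factorial * (q + a + b - k).factorial /
        ((q + b - k).factorial * k.factorial * (c - k).factorial * (b - k).factorial) =
      (∑ k ∈ range (b + 1), (-1) ^ k * (b.choose k : ℝ) *
        (descPochhammer ℝ b).eval ((c - q : ℝ) + (q + b - k : ℕ)) *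
        ((q + a + b - k).descFactorial a : ℝ)) / b.factorial := by
  rw [sum_div]
  refine sum_congr rfl fun k hk => ?_
  have hkb := Nat.lt_succ_iff.mp (mem_range.mp hk)
  have hcb : (b.choose k : ℝ) ≠ 0 := Nat.cast_ne_zero.mpr (Nat.choose_pos hkb).ne'
  rw [show (c - q : ℝ) + ((q + b - k : ℕ) : ℝ) = ((b + c - k : ℕ) : ℝ) by
      push_cast [Nat.cast_sub (show k ≤ q + b by omega), Nat.cast_sub (show k ≤ b + c by omega)]
      ring,
    descPochhammer_eval_eq_descFactorial,
    Nat.cast_factorial_eq_mul_descFactorial (show b ≤ b + c - k by omega),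
    show b + c - k - b = c - k by omega,
    Nat.cast_factorial_eq_mul_descFactorial (show a ≤ q + a + b - k by omega),
    show q + a + b - k - a = q + b - k by omega,
    Nat.cast_factorial_eq_choose_mul hkb]
  field_simp

theorem Real.Gamma_eq_factorial_of_eq {x : ℝ} {n : ℕ} (h : x = n + 1) :
    Real.Gamma x = n.factorial := by
  rw [h, Real.Gamma_nat_eq_factorial]

open Real in
theorem sum_Gamma_div_eq_sum_factorial_div (a b q c : ℕ) :
    ∑ k ∈ range (min (a + 1) (b + 1)),
        Gamma (((c + 1 : ℕ) : ℝ) + k) /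
          (Gamma (((a + 1 : ℕ) : ℝ) - k) * (k.factorial : ℝ) ^ 2 *
            Gamma (((q + 1 : ℕ) : ℝ) + k) * Gamma (((b + 1 : ℕ) : ℝ) - k)) =
      ∑ k ∈ range (min (a + 1) (b + 1)), ((c + k).factorial : ℝ) /
        ((a - k).factorial * (k.factorial : ℝ) ^ 2 * (q + k).factorial * (b - k).factorial) := by
  refine sum_congr rfl fun k hk => ?_
  rw [mem_range, lt_min_iff] at hk
  rw [Gamma_eq_factorial_of_eq (n := c + k) (by push_cast; ring),
    Gamma_eq_factorial_of_eq (n := a - k) (by push_cast [Nat.cast_sub (by omega : k ≤ a)]; ring),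
    Gamma_eq_factorial_of_eq (n := q + k) (by push_cast; ring),
    Gamma_eq_factorial_of_eq (n := b - k) (by push_cast [Nat.cast_sub (by omega : k ≤ b)]; ring)]

open Real in
theorem sum_neg_one_pow_Gamma_div_eq_sum_factorial_div (a b q c : ℕ) (hbc : b ≤ c) :
    ∑ k ∈ range (b + 1),
        (-1 : ℝ) ^ k * Gamma (((b + 1 : ℕ) : ℝ) + ((c + 1 : ℕ) : ℝ) - 1 - k) *
            Gamma (((q + 1 : ℕ) : ℝ) + ((a + 1 : ℕ) : ℝ) + ((b + 1 : ℕ) : ℝ) - 2 - k) /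
          (Gamma (((q + 1 : ℕ) : ℝ) - 1 + ((b + 1 : ℕ) : ℝ) - k) * k.factorial *
            Gamma (((c + 1 : ℕ) : ℝ) - k) * Gamma (((b + 1 : ℕ) : ℝ) - k)) =
      ∑ k ∈ range (b + 1), (-1 : ℝ) ^ k * (b + c - k).factorial * (q + a + b - k).factorial /
        ((q + b - k).factorial * k.factorial * (c - k).factorial * (b - k).factorial) := by
  refine sum_congr rfl fun k hk => ?_
  have hkb := Nat.lt_succ_iff.mp (mem_range.mp hk)
  rw [Gamma_eq_factorial_of_eq (n := b + c - k)
      (by push_cast [Nat.cast_sub (by omega : k ≤ b + c)]; ring),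
    Gamma_eq_factorial_of_eq (n := q + a + b - k)
      (by push_cast [Nat.cast_sub (by omega : k ≤ q + a + b)]; ring),
    Gamma_eq_factorial_of_eq (n := q + b - k)
      (by push_cast [Nat.cast_sub (by omega : k ≤ q + b)]; ring),
    Gamma_eq_factorial_of_eq (n := c - k) (by push_cast [Nat.cast_sub (by omega : k ≤ c)]; ring),
    Gamma_eq_factorial_of_eq (n := b - k) (by push_cast [Nat.cast_sub (by omega : k ≤ b)]; ring)]

theorem terminating_sums_transform_general (m n j p : ℕ) (hn : 0 < n) (hj : 0 < j)
    (hp : 0 < p) (hmn : n ≤ m) :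
    ∑ k ∈ range (min j n),
        Real.Gamma ((m : ℝ) + (k : ℝ)) /
          (Real.Gamma ((j : ℝ) - (k : ℝ)) * ((k.factorial : ℝ)) ^ 2 *
            Real.Gamma ((p : ℝ) + (k : ℝ)) * Real.Gamma ((n : ℝ) - (k : ℝ))) =
      Real.Gamma (m : ℝ) /
          (Real.Gamma ((p : ℝ) - 1 + (j : ℝ)) * Real.Gamma (n : ℝ) *
            Real.Gamma (j : ℝ)) *
        ∑ k ∈ range (min (min m n) (p - 1 + n)),
          (-1 : ℝ) ^ k * Real.Gamma ((n : ℝ) + (m : ℝ) - 1 - (k : ℝ)) *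
              Real.Gamma ((p : ℝ) + (j : ℝ) + (n : ℝ) - 2 - (k : ℝ)) /
            (Real.Gamma ((p : ℝ) - 1 + (n : ℝ) - (k : ℝ)) * (k.factorial : ℝ) *
              Real.Gamma ((m : ℝ) - (k : ℝ)) * Real.Gamma ((n : ℝ) - (k : ℝ))) := by
  obtain ⟨a, rfl⟩ : ∃ a, j = a + 1 := ⟨j - 1, by omega⟩
  obtain ⟨b, rfl⟩ : ∃ b, n = b + 1 := ⟨n - 1, by omega⟩
  obtain ⟨q, rfl⟩ : ∃ q, p = q + 1 := ⟨p - 1, by omega⟩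
  obtain ⟨c, rfl⟩ : ∃ c, m = c + 1 := ⟨m - 1, by omega⟩
  have hbc : b ≤ c := by omega
  rw [show min (min (c + 1) (b + 1)) (q + 1 - 1 + (b + 1)) = b + 1 by omega,
    sum_Gamma_div_eq_sum_factorial_div, sum_factorial_div_eq_sum_descPochhammer,
    sum_neg_one_pow_Gamma_div_eq_sum_factorial_div _ _ _ _ hbc,
    sum_neg_one_pow_factorial_div_eq_sum_descPochhammer _ _ _ _ hbc,
    ← descPochhammer_sum_transform,
    Real.Gamma_eq_factorial_of_eq (n := c) (by push_cast; ring),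
    Real.Gamma_eq_factorial_of_eq (n := q + a) (by push_cast; ring),
    Real.Gamma_eq_factorial_of_eq (n := b) (by push_cast; ring),
    Real.Gamma_eq_factorial_of_eq (n := a) (by push_cast; ring)]
  field_simp

/-- An identity between two terminating sums, equivalent to the transformation
`₃F₂(−n, −j, m; 1, p; 1)` into `₃F₂(1−m, −n, 1−p−n; 1−p−j−n, 1−m−n; 1)`.
The sum `Σ_{k=0}^{min (j−1) (n−1)}` is expressed as a sum over `range (min j n)`, and
`Σ_{k=0}^{min (m, n, p−1+n) − 1}` as a sum over `range (min (min m n) (p−1+n))`. -/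
theorem terminating_sums_transform (m n j p : ℕ) (hm : 0 < m) (hn : 0 < n) (hj : 0 < j)
    (hp : 0 < p) (hmn : n ≤ m) :
    ∑ k ∈ range (min j n),
        Real.Gamma ((m : ℝ) + (k : ℝ)) /
          (Real.Gamma ((j : ℝ) - (k : ℝ)) * ((k.factorial : ℝ)) ^ 2 *
            Real.Gamma ((p : ℝ) + (k : ℝ)) * Real.Gamma ((n : ℝ) - (k : ℝ))) =
      Real.Gamma (m : ℝ) /
          (Real.Gamma ((p : ℝ) - 1 + (j : ℝ)) * Real.Gamma (n : ℝ) *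
            Real.Gamma (j : ℝ)) *
        ∑ k ∈ range (min (min m n) (p - 1 + n)),
          (-1 : ℝ) ^ k * Real.Gamma ((n : ℝ) + (m : ℝ) - 1 - (k : ℝ)) *
              Real.Gamma ((p : ℝ) + (j : ℝ) + (n : ℝ) - 2 - (k : ℝ)) /
            (Real.Gamma ((p : ℝ) - 1 + (n : ℝ) - (k : ℝ)) * (k.factorial : ℝ) *
              Real.Gamma ((m : ℝ) - (k : ℝ)) * Real.Gamma ((n : ℝ) - (k : ℝ))) :=
  terminating_sums_transform_general m n j p hn hj hp hmn
end
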